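/- arXiv:2410.01326 — 5 statements merged into one kernel-verified Lean document; each statement's English description precedes it below -/
import Mathlib

section
/- Let 𝓘 = {I_1, …, I_s} be a finite collection of bounded open intervals in ℝ and let U = I_1 ∪ ⋯ ∪ I_s. Then there exists a subset 𝓙 ⊆ 𝓘 such that the union of the intervals in 𝓙 equals U, and every point of U belongs to exactly one or exactly two of the intervals in 𝓙. -/
theorem stmt13 (S : Finset (ℝ × ℝ)) (hS : ∀ p ∈ S, p.1 < p.2) :
    ∃ T : Finset (ℝ × ℝ), T ⊆ S ∧
      (⋃ p ∈ T, Set.Ioo p.1 p.2) = (⋃ p ∈ S, Set.Ioo p.1 p.2) ∧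
      ∀ x ∈ ⋃ p ∈ S, Set.Ioo p.1 p.2,
        Set.ncard {p : ℝ × ℝ | p ∈ T ∧ x ∈ Set.Ioo p.1 p.2} = 1 ∨
        Set.ncard {p : ℝ × ℝ | p ∈ T ∧ x ∈ Set.Ioo p.1 p.2} = 2 := by
  classical
  set U := ⋃ p ∈ S, Set.Ioo p.1 p.2 with hU
  set F : Finset (Finset (ℝ × ℝ)) :=
    S.powerset.filter (fun T => (⋃ p ∈ T, Set.Ioo p.1 p.2) = U) with hF
  have hSF : S ∈ F := by simp [hF, hU]
  obtain ⟨T, hTF, hTmin⟩ := F.exists_min_image Finset.card ⟨S, hSF⟩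
  have hTS : T ⊆ S := Finset.mem_powerset.mp (Finset.mem_filter.mp hTF).1
  have hTu : (⋃ p ∈ T, Set.Ioo p.1 p.2) = U := (Finset.mem_filter.mp hTF).2
  refine ⟨T, hTS, hTu, ?_⟩
  intro x hx
  set A : Finset (ℝ × ℝ) := T.filter (fun p => x ∈ Set.Ioo p.1 p.2) with hA
  have hset : {p : ℝ × ℝ | p ∈ T ∧ x ∈ Set.Ioo p.1 p.2} = ↑A := by
    ext p; simp [hA]
  rw [hset, Set.ncard_coe_finset]
  -- A is nonempty
  have hxT : x ∈ ⋃ p ∈ T, Set.Ioo p.1 p.2 := by rw [hTu]; exact hx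
  rw [Set.mem_iUnion₂] at hxT
  obtain ⟨p0, hp0T, hp0x⟩ := hxT
  have hAne : A.Nonempty := ⟨p0, Finset.mem_filter.mpr ⟨hp0T, hp0x⟩⟩
  have h1 : 1 ≤ A.card := Finset.card_pos.mpr hAne
  -- A.card ≤ 2
  have h2 : A.card ≤ 2 := by
    by_contra h
    push_neg at h
    obtain ⟨a, haA, ha⟩ := A.exists_min_image (fun p => p.1) hAne
    obtain ⟨b, hbA, hb⟩ := A.exists_max_image (fun p => p.2) hAne
    -- find c ∈ A distinct from a and b
    have hcard : 1 ≤ (A \ {a, b}).card := by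
      have h1 : (A \ ({a, b} : Finset (ℝ × ℝ))).card + ({a, b} : Finset (ℝ × ℝ)).card
          ≥ A.card := by
        have := Finset.card_sdiff_add_card A ({a, b} : Finset (ℝ × ℝ))
        rw [this]
        exact Finset.card_le_card Finset.subset_union_left
      have h2 : ({a, b} : Finset (ℝ × ℝ)).card ≤ 2 := by
        apply le_trans (Finset.card_insert_le _ _)
        simp
      omega
    obtain ⟨c, hc⟩ := Finset.card_pos.mp (show 0 < (A \ ({a, b} : Finset (ℝ × ℝ))).card by omega)
    rw [Finset.mem_sdiff] at hc
    obtain ⟨hcA, hcab⟩ := hc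
    have hca : c ≠ a := by intro h; exact hcab (by simp [h])
    have hcb : c ≠ b := by intro h; exact hcab (by simp [h])
    -- facts about a, b, c
    have haT : a ∈ T := (Finset.mem_filter.mp haA).1
    have hbT : b ∈ T := (Finset.mem_filter.mp hbA).1
    have hcT : c ∈ T := (Finset.mem_filter.mp hcA).1
    have hxa : x ∈ Set.Ioo a.1 a.2 := (Finset.mem_filter.mp haA).2
    have hxb : x ∈ Set.Ioo b.1 b.2 := (Finset.mem_filter.mp hbA).2
    have hac : a.1 ≤ c.1 := ha c hcA
    have hcb2 : c.2 ≤ b.2 := hb c hcA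
    -- T.erase c has the same union
    set T' := T.erase c with hT'
    have hT'u : (⋃ p ∈ T', Set.Ioo p.1 p.2) = U := by
      apply le_antisymm
      · rw [← hTu]
        exact Set.biUnion_subset_biUnion_left (fun p hp => Finset.mem_of_mem_erase hp)
      · rw [← hTu]
        intro y hy
        rw [Set.mem_iUnion₂] at hy
        obtain ⟨q, hqT, hqy⟩ := hy
        by_cases hqc : q = c
        · subst hqc
          rcases le_total y x with hyx | hxy
          · have : y ∈ Set.Ioo a.1 a.2 :=
              ⟨lt_of_le_of_lt hac hqy.1, lt_of_le_of_lt hyx hxa.2⟩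
            exact Set.mem_biUnion (Finset.mem_erase.mpr ⟨hca.symm, haT⟩) this
          · have : y ∈ Set.Ioo b.1 b.2 :=
              ⟨lt_of_lt_of_le hxb.1 hxy, lt_of_lt_of_le hqy.2 hcb2⟩
            exact Set.mem_biUnion (Finset.mem_erase.mpr ⟨hcb.symm, hbT⟩) this
        · exact Set.mem_biUnion (Finset.mem_erase.mpr ⟨hqc, hqT⟩) hqy
    have hT'F : T' ∈ F := by
      rw [hF, Finset.mem_filter, Finset.mem_powerset]
      exact ⟨(Finset.erase_subset _ _).trans hTS, hT'u⟩
    have := hTmin T' hT'F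
    have hlt : T'.card < T.card := Finset.card_erase_lt_of_mem hcT
    omega
  omega
end

section
/- Let d ≥ 1 be an integer and θ ∈ ℂ a primitive d-th root of unity. Then for all λ, μ ∈ ℂ: min_{σ ∈ S_d} ((1/d) Σ_{i=1}^d |θ^i λ − θ^{σ(i)} μ|²)^{1/2} = min_{1≤j≤d} |λ − θ^j μ|, where S_d is the symmetric group on {1,…,d}. In particular, the map λ ↦ (θλ, θ²λ, …, θ^d λ) induces a map into unordered d-tuples that is 1-Lipschitz with respect to the distance 𝐝. -/
/-! Since `|θ| = 1`, the term `|θ^i λ - θ^k μ|` equals `|λ - θ^(k-i) μ|`, so every matching `σ`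
has all its terms, hence its root mean square, at least `min_j |λ - θ^j μ|`; and the rotation
`i ↦ i + j` makes all terms equal to `|λ - θ^j μ|`, attaining that value. The term with `θ^d = 1`
gives the Lipschitz bound. -/

open Finset

section RootMeanSquare

variable {ι : Type*} [Fintype ι] [Nonempty ι]

theorem Real.le_sqrt_inv_card_mul_sum_sq {f : ι → ℝ} {m : ℝ} (hm : 0 ≤ m)
    (h : ∀ i, m ≤ f i) : m ≤ √(1 / (Fintype.card ι : ℝ) * ∑ i, f i ^ 2) := by
  have hcard : (0 : ℝ) < Fintype.card ι := by exact_mod_cast Fintype.card_pos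
  have hsum : ∑ _i : ι, m ^ 2 ≤ ∑ i, f i ^ 2 :=
    sum_le_sum fun i _ => pow_le_pow_left₀ hm (h i) 2
  rw [Real.le_sqrt hm (by positivity), sum_const, card_univ, nsmul_eq_mul] at *
  rw [div_mul_eq_mul_div, le_div_iff₀ hcard]
  linarith

theorem Real.sqrt_inv_card_mul_sum_const_sq {c : ℝ} (hc : 0 ≤ c) :
    √(1 / (Fintype.card ι : ℝ) * ∑ _i : ι, c ^ 2) = c := by
  have hcard : (Fintype.card ι : ℝ) ≠ 0 := by exact_mod_cast Fintype.card_ne_zero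
  rw [sum_const, card_univ, nsmul_eq_mul, ← mul_assoc, one_div_mul_cancel hcard, one_mul,
    Real.sqrt_sq hc]

end RootMeanSquare

theorem norm_mul_sub_mul_mul {𝕜 : Type*} [NormedDivisionRing 𝕜] {u : 𝕜} (hu : ‖u‖ = 1)
    (w a b : 𝕜) : ‖u * a - u * w * b‖ = ‖a - w * b‖ := by
  rw [mul_assoc, ← mul_sub, norm_mul, hu, one_mul]

section RootOfUnity

variable {M : Type*} [Monoid M] {d : ℕ} {θ : M}

theorem exists_fin_pow_eq (hd : 0 < d) (hθ : θ ^ d = 1) (n : ℕ) :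
    ∃ c : Fin d, θ ^ (c : ℕ) = θ ^ n :=
  ⟨⟨n % d, Nat.mod_lt n hd⟩, (pow_eq_pow_mod n hθ).symm⟩

theorem pow_val_add_succ (hθ : θ ^ d = 1) (i c : Fin d) :
    θ ^ ((i + c : Fin d) + 1 : ℕ) = θ ^ ((i : ℕ) + 1) * θ ^ (c : ℕ) := by
  rw [Fin.val_add, pow_succ, ← pow_eq_pow_mod _ hθ, ← pow_succ, ← pow_add, add_right_comm]

theorem exists_pow_succ_eq_pow_succ_mul (hd : 0 < d) (hθ : θ ^ d = 1) (i k : Fin d) :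
    ∃ j : Fin d, θ ^ ((k : ℕ) + 1) = θ ^ ((i : ℕ) + 1) * θ ^ ((j : ℕ) + 1) := by
  obtain ⟨j, hj⟩ := exists_fin_pow_eq hd hθ (k + d - i - 1)
  refine ⟨j, ?_⟩
  rw [pow_succ θ (j : ℕ), hj, ← pow_succ, ← pow_add,
    show (i : ℕ) + 1 + (k + d - i - 1 + 1) = k + 1 + d by omega,
    pow_add θ (k + 1), hθ, mul_one]

end RootOfUnity

theorem stmt15_general (d : ℕ) (hd : 1 ≤ d) (θ : ℂ) (hθd : θ ^ d = 1)
    (lam mu : ℂ) :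
    (⨅ σ : Equiv.Perm (Fin d), Real.sqrt ((1 / (d : ℝ)) * ∑ i : Fin d,
        ‖θ ^ ((i : ℕ) + 1) * lam - θ ^ (((σ i : Fin d) : ℕ) + 1) * mu‖ ^ 2)) =
      (⨅ j : Fin d, ‖lam - θ ^ ((j : ℕ) + 1) * mu‖) ∧
    (⨅ σ : Equiv.Perm (Fin d), Real.sqrt ((1 / (d : ℝ)) * ∑ i : Fin d,
        ‖θ ^ ((i : ℕ) + 1) * lam - θ ^ (((σ i : Fin d) : ℕ) + 1) * mu‖ ^ 2)) ≤
      ‖lam - mu‖ := by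
  have : NeZero d := ⟨by omega⟩
  have hθ (n : ℕ) : ‖θ ^ n‖ = 1 := by
    rw [norm_pow, Complex.norm_eq_one_of_pow_eq_one hθd (by omega), one_pow]
  set m := ⨅ j : Fin d, ‖lam - θ ^ ((j : ℕ) + 1) * mu‖
  have hbdd {ι : Type} [Finite ι] (f : ι → ℝ) : BddBelow (Set.range f) :=
    (Set.finite_range f).bddBelow
  have hterm (i k : Fin d) : m ≤ ‖θ ^ ((i : ℕ) + 1) * lam - θ ^ ((k : ℕ) + 1) * mu‖ := by
    obtain ⟨j, hj⟩ := exists_pow_succ_eq_pow_succ_mul hd hθd i k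
    rw [hj, norm_mul_sub_mul_mul (hθ _)]
    exact ciInf_le (hbdd _) j
  have hrot (j c i : Fin d) (hc : θ ^ (c : ℕ) = θ ^ ((j : ℕ) + 1)) :
      ‖θ ^ ((i : ℕ) + 1) * lam - θ ^ ((Equiv.addRight c i : Fin d) + 1 : ℕ) * mu‖ =
        ‖lam - θ ^ ((j : ℕ) + 1) * mu‖ := by
    rw [Equiv.coe_addRight, pow_val_add_succ hθd, hc,
      norm_mul_sub_mul_mul (hθ _)]
  have heq : (⨅ σ : Equiv.Perm (Fin d), Real.sqrt ((1 / (d : ℝ)) * ∑ i : Fin d,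
      ‖θ ^ ((i : ℕ) + 1) * lam - θ ^ (((σ i : Fin d) : ℕ) + 1) * mu‖ ^ 2)) = m := by
    refine le_antisymm (le_ciInf fun j => ?_) (le_ciInf fun σ => ?_)
    · obtain ⟨c, hc⟩ := exists_fin_pow_eq hd hθd ((j : ℕ) + 1)
      refine ciInf_le_of_le (hbdd _) (Equiv.addRight c) ?_
      simpa only [hrot j c _ hc, Fintype.card_fin] using (Real.sqrt_inv_card_mul_sum_const_sq
        (ι := Fin d) (norm_nonneg (lam - θ ^ ((j : ℕ) + 1) * mu))).le
    · simpa only [Fintype.card_fin] using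
        Real.le_sqrt_inv_card_mul_sum_sq (le_ciInf fun _ => norm_nonneg _) fun i => hterm i (σ i)
  refine ⟨heq, heq ▸ ciInf_le_of_le (hbdd _) ⟨d - 1, by omega⟩ ?_⟩
  rw [Nat.sub_add_cancel hd, hθd, one_mul]

theorem stmt15 (d : ℕ) (hd : 1 ≤ d) (θ : ℂ) (hθd : θ ^ d = 1)
    (hθprim : ∀ j : ℕ, 0 < j → j < d → θ ^ j ≠ 1) (lam mu : ℂ) :
    (⨅ σ : Equiv.Perm (Fin d), Real.sqrt ((1 / (d : ℝ)) * ∑ i : Fin d,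
        ‖θ ^ ((i : ℕ) + 1) * lam - θ ^ (((σ i : Fin d) : ℕ) + 1) * mu‖ ^ 2)) =
      (⨅ j : Fin d, ‖lam - θ ^ ((j : ℕ) + 1) * mu‖) ∧
    (⨅ σ : Equiv.Perm (Fin d), Real.sqrt ((1 / (d : ℝ)) * ∑ i : Fin d,
        ‖θ ^ ((i : ℕ) + 1) * lam - θ ^ (((σ i : Fin d) : ℕ) + 1) * mu‖ ^ 2)) ≤
      ‖lam - mu‖ :=
  stmt15_general d hd θ hθd lam mu
end

section
/- Let d ≥ 1 be an integer, γ ∈ (0,1], and let I = [α,β] ⊆ ℝ be a bounded closed interval. Let a = (a_1,…,a_d) : I → ℂ^d be γ-Hölder continuous, and set A := max_{1≤j≤d} sup_{x≠y ∈ I} |a_j(x) − a_j(y)|/|x−y|^γ and B := 2 max_{1≤j≤d} (sup_{x∈I} |a_j(x)|)^{1/j}. Let λ : I → ℂ be a continuous root of P_a on I, i.e. P_{a(x)}(λ(x)) = 0 for all x ∈ I. Then for all x, y ∈ I: |λ(x) − λ(y)| ≤ H₁ |x−y|^{γ/d}, where H₁ := 2d · A^{1/d} · (1 + B + B² + ⋯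 + B^{d−1})^{1/d}. -/
/-!
Fix `x` and let `P := P_{a(x)}`. For `t` between `x` and `y`, `λ(t)` is a root of `P_{a(t)}`, of
modulus at most `B` by the coefficient bounds, so the Hölder bound on the coefficients gives
`|P(λ(t))| ≤ A |x - y|^γ (1 + B + ⋯ + B^{d-1}) =: r^d`. Since `|P(z)| = ∏ |z - μ_i|` over the
roots of `P`, every `λ(t)` lies within `r` of a root of `P`. Hence `t ↦ |λ(t) - λ(x)|` maps the
segment `[x, y]` onto an interval `[0, |λ(y) - λ(x)|]` covered by at most `d` intervals of
length `2r`, and comparing lengths gives `|λ(x) - λ(y)| ≤ 2 d r`.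
-/

open Polynomial Set MeasureTheory

theorem Polynomial.Monic.exists_mem_roots_norm_sub_pow_le {K : Type*} [NormedField K]
    [IsAlgClosed K] {p : K[X]} (hp : p.Monic) (hdeg : p.natDegree ≠ 0) (z : K) :
    ∃ μ ∈ p.roots, ‖z - μ‖ ^ p.natDegree ≤ ‖p.eval z‖ := by
  classical
  have hsplit := IsAlgClosed.splits p
  have hcard : Multiset.card p.roots = p.natDegree := hsplit.natDegree_eq_card_roots.symm
  have hne : p.roots.toFinset.Nonempty := by
    rw [Multiset.toFinset_nonempty, ← Multiset.card_pos, hcard]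
    exact Nat.pos_of_ne_zero hdeg
  obtain ⟨μ, hμ, hmin⟩ := p.roots.toFinset.exists_min_image (fun ν => ‖z - ν‖) hne
  refine ⟨μ, Multiset.mem_toFinset.1 hμ, ?_⟩
  calc ‖z - μ‖ ^ p.natDegree = (p.roots.map fun _ => ‖z - μ‖).prod := by
        rw [Multiset.map_const', Multiset.prod_replicate, hcard]
    _ ≤ (p.roots.map fun ν => ‖z - ν‖).prod :=
        Multiset.prod_map_le_prod_map₀ _ _ (fun _ _ => norm_nonneg _)
          fun ν hν => hmin ν (Multiset.mem_toFinset.2 hν)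
    _ = ‖p.eval z‖ := by
        rw [hsplit.eval_eq_prod_roots_of_monic hp]
        exact p.roots.prod_hom' (normHom : K →*₀ ℝ) (z - ·)

/-- `P_a` with `c j = a_{j+1}` (indices shifted to start at `0`). -/
noncomputable def monicPoly {R : Type*} [Semiring R] {d : ℕ} (c : Fin d → R) : R[X] :=
  X ^ d + ∑ j : Fin d, C (c j) * X ^ (d - 1 - (j : ℕ))

section MonicPoly

variable {R : Type*} {d : ℕ}

theorem eval_monicPoly [CommSemiring R] (c : Fin d → R) (z : R) :
    (monicPoly c).eval z = z ^ d + ∑ j : Fin d, c j * z ^ (d - 1 - (j : ℕ)) := by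
  simp [monicPoly, eval_finsetSum]

theorem degree_sum_C_mul_X_pow_sub_lt [Semiring R] (c : Fin d → R) :
    (∑ j : Fin d, C (c j) * X ^ (d - 1 - (j : ℕ))).degree < (d : WithBot ℕ) := by
  refine (degree_sum_le _ _).trans_lt
    ((Finset.sup_lt_iff (by exact WithBot.bot_lt_coe d)).2 fun j _ => ?_)
  refine (degree_C_mul_X_pow_le _ _).trans_lt ?_
  exact_mod_cast (show d - 1 - (j : ℕ) < d by omega)

theorem monic_monicPoly [Semiring R] (c : Fin d → R) : (monicPoly c).Monic :=
  monic_X_pow_add (degree_sum_C_mul_X_pow_sub_lt c)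

theorem natDegree_monicPoly [Semiring R] [Nontrivial R] (c : Fin d → R) :
    (monicPoly c).natDegree = d := by
  rw [monicPoly, natDegree_add_eq_left_of_degree_lt, natDegree_X_pow]
  simpa only [degree_X_pow] using degree_sum_C_mul_X_pow_sub_lt c

variable {K : Type*} [NormedField K]

theorem norm_le_of_eval_monicPoly_eq_zero {c : Fin d → K} {z : K} {B : ℝ} (hB : 0 ≤ B)
    (hc : ∀ j : Fin d, ‖c j‖ ≤ (B / 2) ^ ((j : ℕ) + 1)) (hz : (monicPoly c).eval z = 0) :
    ‖z‖ ≤ B := by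
  by_contra! hBz
  have hz0 : 0 < ‖z‖ := hB.trans_lt hBz
  have hsplit (j : Fin d) : (‖z‖ / 2) ^ ((j : ℕ) + 1) * ‖z‖ ^ (d - 1 - (j : ℕ)) =
      ‖z‖ ^ d * (1 / 2) ^ ((j : ℕ) + 1) := by
    have hd : ‖z‖ ^ d = ‖z‖ ^ ((j : ℕ) + 1) * ‖z‖ ^ (d - 1 - (j : ℕ)) := by
      rw [← pow_add]; congr 1; omega
    rw [hd]; ring
  have hgeom : ∑ j : Fin d, (1 / 2 : ℝ) ^ ((j : ℕ) + 1) < 1 := calc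
    ∑ j : Fin d, (1 / 2 : ℝ) ^ ((j : ℕ) + 1)
        = (∑ i ∈ Finset.range d, (1 / 2 : ℝ) ^ i) * (1 / 2) := by
          rw [Finset.sum_mul, ← Fin.sum_univ_eq_sum_range (fun i => (1 / 2 : ℝ) ^ i * (1 / 2))]
          simp only [pow_succ]
    _ = 1 - (1 / 2) ^ d := by rw [geom_sum_eq (by norm_num)]; ring
    _ < 1 := by linarith [pow_pos (by norm_num : (0 : ℝ) < 1 / 2) d]
  have hzd : z ^ d = -∑ j : Fin d, c j * z ^ (d - 1 - (j : ℕ)) := by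
    rw [eval_monicPoly] at hz
    linear_combination hz
  refine lt_irrefl (‖z‖ ^ d) ?_
  calc ‖z‖ ^ d = ‖∑ j : Fin d, c j * z ^ (d - 1 - (j : ℕ))‖ := by rw [← norm_pow, hzd, norm_neg]
    _ ≤ ∑ j : Fin d, ‖c j‖ * ‖z‖ ^ (d - 1 - (j : ℕ)) :=
      (norm_sum_le _ _).trans_eq (by simp only [norm_mul, norm_pow])
    _ ≤ ∑ j : Fin d, (‖z‖ / 2) ^ ((j : ℕ) + 1) * ‖z‖ ^ (d - 1 - (j : ℕ)) := by
      gcongr with j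
      exact (hc j).trans (by gcongr)
    _ = ‖z‖ ^ d * ∑ j : Fin d, (1 / 2 : ℝ) ^ ((j : ℕ) + 1) := by
      simp only [hsplit, Finset.mul_sum]
    _ < ‖z‖ ^ d := mul_lt_of_lt_one_right (by positivity) hgeom

theorem norm_eval_monicPoly_sub_le {c c' : Fin d → K} {z : K} {ε B : ℝ}
    (hc : ∀ j : Fin d, ‖c j - c' j‖ ≤ ε) (hz : ‖z‖ ≤ B) :
    ‖(monicPoly c).eval z - (monicPoly c').eval z‖ ≤ ε * ∑ i : Fin d, B ^ (i : ℕ) := calc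
  ‖(monicPoly c).eval z - (monicPoly c').eval z‖
      = ‖∑ j : Fin d, (c j - c' j) * z ^ (d - 1 - (j : ℕ))‖ := by
        simp only [eval_monicPoly, sub_mul, Finset.sum_sub_distrib, add_sub_add_left_eq_sub]
  _ ≤ ∑ j : Fin d, ε * B ^ (d - 1 - (j : ℕ)) := by
        refine (norm_sum_le _ _).trans (Finset.sum_le_sum fun j _ => ?_)
        rw [norm_mul, norm_pow]
        exact mul_le_mul (hc j) (pow_le_pow_left₀ (norm_nonneg z) hz _) (by positivity)
          ((norm_nonneg _).trans (hc j))
  _ = ε * ∑ i : Fin d, B ^ (i : ℕ) := by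
        rw [← Finset.mul_sum]
        congr 1
        exact Fintype.sum_bijective Fin.rev Fin.rev_bijective _ _ fun j => by
          rw [Fin.val_rev]; congr 1; omega

theorem exists_mem_roots_monicPoly_norm_sub_pow_le [IsAlgClosed K] (hd : d ≠ 0)
    {c c' : Fin d → K} {z : K} {ε B : ℝ} (hB : 0 ≤ B)
    (hc' : ∀ j : Fin d, ‖c' j‖ ≤ (B / 2) ^ ((j : ℕ) + 1)) (hz : (monicPoly c').eval z = 0)
    (hcc' : ∀ j : Fin d, ‖c j - c' j‖ ≤ ε) :
    ∃ μ ∈ (monicPoly c).roots, ‖z - μ‖ ^ d ≤ ε * ∑ i : Fin d, B ^ (i : ℕ) := by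
  have hdeg := natDegree_monicPoly c
  obtain ⟨μ, hμ, hμz⟩ := (monic_monicPoly c).exists_mem_roots_norm_sub_pow_le (by rwa [hdeg]) z
  rw [hdeg] at hμz
  refine ⟨μ, hμ, hμz.trans ?_⟩
  have := norm_eval_monicPoly_sub_le hcc' (norm_le_of_eval_monicPoly_eq_zero hB hc' hz)
  rwa [hz, sub_zero] at this

end MonicPoly

theorem ContinuousOn.dist_le_two_mul_card_mul_of_forall_exists_dist_le {E : Type*}
    [PseudoMetricSpace E] {f : ℝ → E} {u v r : ℝ} (hf : ContinuousOn f (uIcc u v)) (s : Finset E)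
    (hnear : ∀ t ∈ uIcc u v, ∃ μ ∈ s, dist (f t) μ ≤ r) :
    dist (f u) (f v) ≤ 2 * s.card * r := by
  have hr : 0 ≤ r := by
    obtain ⟨μ, -, hμ⟩ := hnear u left_mem_uIcc
    exact dist_nonneg.trans hμ
  have hcover : Icc 0 (dist (f v) (f u)) ⊆
      ⋃ μ ∈ s, Icc (dist μ (f u) - r) (dist μ (f u) + r) := by
    intro w hw
    obtain ⟨t, ht, rfl⟩ : w ∈ (fun t => dist (f t) (f u)) '' uIcc u v :=
      intermediate_value_uIcc ((continuous_id.dist continuous_const).comp_continuousOn hf)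
        (by simpa using Icc_subset_uIcc hw)
    obtain ⟨μ, hμ, htμ⟩ := hnear t ht
    have := abs_le.1 ((abs_dist_sub_le (f t) μ (f u)).trans htμ)
    exact mem_biUnion hμ ⟨by linarith, by linarith⟩
  have hvol : ENNReal.ofReal (dist (f v) (f u)) ≤ ENNReal.ofReal (2 * s.card * r) := calc
    ENNReal.ofReal (dist (f v) (f u)) = volume (Icc 0 (dist (f v) (f u))) := by
      rw [Real.volume_Icc, sub_zero]
    _ ≤ ∑ μ ∈ s, volume (Icc (dist μ (f u) - r) (dist μ (f u) + r)) :=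
      (measure_mono hcover).trans (measure_biUnion_finset_le _ _)
    _ = ENNReal.ofReal (2 * s.card * r) := by
      simp only [Real.volume_Icc, add_sub_sub_cancel, Finset.sum_const, nsmul_eq_mul]
      rw [← ENNReal.ofReal_natCast, ← ENNReal.ofReal_mul (by positivity)]
      ring_nf
  rw [dist_comm]
  exact (ENNReal.ofReal_le_ofReal_iff (by positivity)).1 hvol

theorem stmt16_general (d : ℕ) (hd : 1 ≤ d) (γ : ℝ) (hγ0 : 0 < γ)
    (α β : ℝ) (a : ℝ → Fin d → ℂ) (A B : ℝ) (hA : 0 ≤ A) (hB : 0 ≤ B)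
    (hHold : ∀ j : Fin d, ∀ x ∈ Set.Icc α β, ∀ y ∈ Set.Icc α β,
      ‖a x j - a y j‖ ≤ A * |x - y| ^ γ)
    (hBound : ∀ j : Fin d, ∀ x ∈ Set.Icc α β,
      ‖a x j‖ ≤ (B / 2) ^ ((j : ℕ) + 1))
    (lam : ℝ → ℂ) (hcont : ContinuousOn lam (Set.Icc α β))
    (hroot : ∀ x ∈ Set.Icc α β,
      lam x ^ d + ∑ j : Fin d, a x j * lam x ^ (d - 1 - (j : ℕ)) = 0) :
    ∀ x ∈ Set.Icc α β, ∀ y ∈ Set.Icc α β,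
      ‖lam x - lam y‖ ≤
        2 * d * A ^ ((d : ℝ)⁻¹) * (∑ i : Fin d, B ^ (i : ℕ)) ^ ((d : ℝ)⁻¹) *
          |x - y| ^ (γ / d) := by
  intro x hx y hy
  have hd0 : d ≠ 0 := by omega
  set S := ∑ i : Fin d, B ^ (i : ℕ)
  set r := A ^ ((d : ℝ)⁻¹) * S ^ ((d : ℝ)⁻¹) * |x - y| ^ (γ / d)
  have hrd : r ^ d = A * |x - y| ^ γ * S := by
    rw [mul_pow, mul_pow, Real.rpow_inv_natCast_pow hA hd0,
      Real.rpow_inv_natCast_pow (by positivity) hd0, ← Real.rpow_natCast,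
      ← Real.rpow_mul (abs_nonneg _), div_mul_cancel₀ _ (Nat.cast_ne_zero.2 hd0)]
    ring
  have hxy : uIcc x y ⊆ Icc α β := uIcc_subset_Icc hx hy
  have hnear : ∀ t ∈ uIcc x y, ∃ μ ∈ (monicPoly (a x)).roots.toFinset, dist (lam t) μ ≤ r := by
    intro t ht
    have hxt : |x - t| ≤ |x - y| := by
      rw [abs_sub_comm x t, abs_sub_comm x y]
      exact abs_sub_left_of_mem_uIcc ht
    obtain ⟨μ, hμ, hμt⟩ := exists_mem_roots_monicPoly_norm_sub_pow_le (ε := A * |x - y| ^ γ) hd0 hB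
      (fun j => hBound j t (hxy ht)) (by rw [eval_monicPoly]; exact hroot t (hxy ht))
      (fun j => (hHold j x hx t (hxy ht)).trans (by gcongr))
    refine ⟨μ, Multiset.mem_toFinset.2 hμ, ?_⟩
    rw [dist_eq_norm, ← pow_le_pow_iff_left₀ (norm_nonneg _) (by positivity) hd0, hrd]
    exact hμt
  calc ‖lam x - lam y‖ = dist (lam x) (lam y) := (dist_eq_norm _ _).symm
    _ ≤ 2 * (monicPoly (a x)).roots.toFinset.card * r :=
      (hcont.mono hxy).dist_le_two_mul_card_mul_of_forall_exists_dist_le _ hnear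
    _ ≤ 2 * d * r := by
      gcongr
      exact_mod_cast (Multiset.toFinset_card_le _).trans
        ((card_roots' _).trans (natDegree_monicPoly _).le)
    _ = _ := by ring

theorem stmt16 (d : ℕ) (hd : 1 ≤ d) (γ : ℝ) (hγ0 : 0 < γ) (hγ1 : γ ≤ 1)
    (α β : ℝ) (hαβ : α ≤ β) (a : ℝ → Fin d → ℂ) (A B : ℝ) (hA : 0 ≤ A) (hB : 0 ≤ B)
    (hHold : ∀ j : Fin d, ∀ x ∈ Set.Icc α β, ∀ y ∈ Set.Icc α β,
      ‖a x j - a y j‖ ≤ A * |x - y| ^ γ)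
    (hBound : ∀ j : Fin d, ∀ x ∈ Set.Icc α β,
      ‖a x j‖ ≤ (B / 2) ^ ((j : ℕ) + 1))
    (lam : ℝ → ℂ) (hcont : ContinuousOn lam (Set.Icc α β))
    (hroot : ∀ x ∈ Set.Icc α β,
      lam x ^ d + ∑ j : Fin d, a x j * lam x ^ (d - 1 - (j : ℕ)) = 0) :
    ∀ x ∈ Set.Icc α β, ∀ y ∈ Set.Icc α β,
      ‖lam x - lam y‖ ≤
        2 * d * A ^ ((d : ℝ)⁻¹) * (∑ i : Fin d, B ^ (i : ℕ)) ^ ((d : ℝ)⁻¹) *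
          |x - y| ^ (γ / d) :=
  stmt16_general d hd γ hγ0 α β a A B hA hB hHold hBound lam hcont hroot
end

section
/- Let U ⊆ ℝ^m and V ⊆ ℝ^ℓ be open, bounded, and convex sets, let k ≥ 0 be an integer, and let ψ : V → ℝ^p be of class C^{k+1} with ‖ψ‖_{C^{k+1}} := max_{0≤j≤k+1} sup_{y∈V} ‖d^j ψ(y)‖ < ∞. Then for every R > 0 there exists a constant C = C(k,R) > 0 such that for all maps φ₁, φ₂ : U → V of class C^k with ‖φ_i‖_{C^k} := max_{0≤j≤k} sup_{x∈U} ‖d^j φ_i(x)‖ ≤ R (i = 1,2), one has ‖ψ∘φ₁ − ψ∘φ₂‖_{C^k} ≤ C · ‖ψ‖_{C^{k+1}} · ‖φ₁ − φ₂‖_{C^k}. -/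
/-!
Faà di Bruno writes the `j`-th derivative of `ψ ∘ φ` at `x` as a sum, over the ordered
partitions of `{0, …, j - 1}`, of `dⁱψ(φ x)` applied to derivatives of `φ` of order `≤ j`.
Each summand is multilinear in the derivatives of `φ` and linear in `dⁱψ(φ x)`, so for two maps
`φ₁, φ₂` with `C^k` norm at most `R` it differs by `O(R^k ‖ψ‖_{C^{k+1}} ‖φ₁ - φ₂‖_{C^k})`; the
factor `‖dⁱψ(φ₁ x) - dⁱψ(φ₂ x)‖ ≤ ‖d^{i+1}ψ‖ ‖φ₁ x - φ₂ x‖` comes from the mean value inequality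
on the convex set `V`.
-/

open Set

section MeanValue

variable {E F : Type*} [NormedAddCommGroup E] [NormedSpace ℝ E]
  [NormedAddCommGroup F] [NormedSpace ℝ F]

theorem Convex.norm_iteratedFDerivWithin_sub_le {f : E → F} {s : Set E} {n : ℕ} {M : ℝ}
    (hs : Convex ℝ s) (hu : UniqueDiffOn ℝ s) (hf : ContDiffOn ℝ (n + 1) f s)
    (hM : ∀ y ∈ s, ‖iteratedFDerivWithin ℝ (n + 1) f s y‖ ≤ M) {x y : E}
    (hx : x ∈ s) (hy : y ∈ s) :
    ‖iteratedFDerivWithin ℝ n f s x - iteratedFDerivWithin ℝ n f s y‖ ≤ M * ‖x - y‖ := by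
  refine hs.norm_image_sub_le_of_norm_fderivWithin_le
    (hf.differentiableOn_iteratedFDerivWithin (by exact_mod_cast Nat.lt_succ_self n) hu)
    (fun z hz ↦ ?_) hy hx
  rw [norm_fderivWithin_iteratedFDerivWithin]
  exact hM z hz

end MeanValue

section Composition

variable {𝕜 E F G : Type*} [NontriviallyNormedField 𝕜]
  [NormedAddCommGroup E] [NormedSpace 𝕜 E] [NormedAddCommGroup F] [NormedSpace 𝕜 F]
  [NormedAddCommGroup G] [NormedSpace 𝕜 G]

theorem norm_iteratedFDerivWithin_zero_sub (f₁ f₂ : E → F) (s : Set E) (x : E) :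
    ‖iteratedFDerivWithin 𝕜 0 f₁ s x - iteratedFDerivWithin 𝕜 0 f₂ s x‖ = ‖f₁ x - f₂ x‖ := by
  rw [iteratedFDerivWithin_zero_eq_comp, iteratedFDerivWithin_zero_eq_comp, Function.comp_apply,
    Function.comp_apply, ← LinearIsometryEquiv.map_sub, LinearIsometryEquiv.norm_map]

theorem iteratedFDerivWithin_comp_sub_comp {g : F → G} {f₁ f₂ : E → F} {s : Set E} {t : Set F}
    {n : WithTop ℕ∞} {x : E} (hg : ContDiffOn 𝕜 n g t) (hf₁ : ContDiffOn 𝕜 n f₁ s)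
    (hf₂ : ContDiffOn 𝕜 n f₂ s) (ht : UniqueDiffOn 𝕜 t) (hs : UniqueDiffOn 𝕜 s)
    (h₁ : MapsTo f₁ s t) (h₂ : MapsTo f₂ s t) (hx : x ∈ s) {i : ℕ} (hi : i ≤ n) :
    iteratedFDerivWithin 𝕜 i (fun y ↦ g (f₁ y) - g (f₂ y)) s x =
      (ftaylorSeriesWithin 𝕜 g t (f₁ x)).taylorComp (ftaylorSeriesWithin 𝕜 f₁ s x) i -
        (ftaylorSeriesWithin 𝕜 g t (f₂ x)).taylorComp (ftaylorSeriesWithin 𝕜 f₂ s x) i := by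
  rw [show (fun y ↦ g (f₁ y) - g (f₂ y)) = g ∘ f₁ - g ∘ f₂ from rfl,
    iteratedFDerivWithin_sub_apply ((hg.comp hf₁ h₁).of_le hi x hx)
      ((hg.comp hf₂ h₂).of_le hi x hx) hs hx,
    iteratedFDerivWithin_comp (hg _ (h₁ hx)) (hf₁ x hx) ht hs hx h₁ hi,
    iteratedFDerivWithin_comp (hg _ (h₂ hx)) (hf₂ x hx) ht hs hx h₂ hi]

end Composition

namespace FormalMultilinearSeries

variable {𝕜 E F G : Type*} [NontriviallyNormedField 𝕜]
  [NormedAddCommGroup E] [NormedSpace 𝕜 E] [NormedAddCommGroup F] [NormedSpace 𝕜 F]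
  [NormedAddCommGroup G] [NormedSpace 𝕜 G]

theorem norm_taylorComp_sub_taylorComp_le {q₁ q₂ : FormalMultilinearSeries 𝕜 F G}
    {p₁ p₂ : FormalMultilinearSeries 𝕜 E F} {n : ℕ} {M δ R D : ℝ} (hR : 1 ≤ R)
    (hq₁ : ∀ i ≤ n, ‖q₁ i‖ ≤ M) (hq : ∀ i ≤ n, ‖q₁ i - q₂ i‖ ≤ δ)
    (hp₁ : ∀ i ≤ n, ‖p₁ i‖ ≤ R) (hp₂ : ∀ i ≤ n, ‖p₂ i‖ ≤ R)
    (hp : ∀ i ≤ n, ‖p₁ i - p₂ i‖ ≤ D) :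
    ‖q₁.taylorComp p₁ n - q₂.taylorComp p₂ n‖
      ≤ Fintype.card (OrderedFinpartition n) * (R ^ n * (M * n * D + δ)) := by
  have hR₀ : 0 ≤ R := zero_le_one.trans hR
  have hM₀ : 0 ≤ M := (norm_nonneg _).trans (hq₁ 0 n.zero_le)
  have hD₀ : 0 ≤ D := (norm_nonneg _).trans (hp 0 n.zero_le)
  have hδ₀ : 0 ≤ δ := (norm_nonneg _).trans (hq 0 n.zero_le)
  have term (c : OrderedFinpartition n) :
      ‖q₁.compAlongOrderedFinpartition p₁ c - q₂.compAlongOrderedFinpartition p₂ c‖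
        ≤ R ^ n * (M * n * D + δ) := by
    have hlen : c.length ≤ n := c.length_le
    have hpart (i : Fin c.length) : c.partSize i ≤ n := c.partSize_le i
    have hg₁ : ‖fun i ↦ p₁ (c.partSize i)‖ ≤ R :=
      (pi_norm_le_iff_of_nonneg hR₀).2 (hp₁ _ <| hpart ·)
    have hg₂ : ‖fun i ↦ p₂ (c.partSize i)‖ ≤ R :=
      (pi_norm_le_iff_of_nonneg hR₀).2 (hp₂ _ <| hpart ·)
    have hg : ‖(fun i ↦ p₁ (c.partSize i)) - fun i ↦ p₂ (c.partSize i)‖ ≤ D :=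
      (pi_norm_le_iff_of_nonneg hD₀).2 (hp _ <| hpart ·)
    have hmax : max ‖fun i ↦ p₁ (c.partSize i)‖ ‖fun i ↦ p₂ (c.partSize i)‖ ^ (c.length - 1)
        ≤ R ^ n :=
      (pow_le_pow_left₀ (by positivity) (max_le hg₁ hg₂) _).trans
        (pow_le_pow_right₀ hR (by omega))
    have hprod : ∏ i, ‖p₂ (c.partSize i)‖ ≤ R ^ n :=
      calc ∏ i, ‖p₂ (c.partSize i)‖ ≤ ∏ _i : Fin c.length, R :=
            Finset.prod_le_prod (fun _ _ ↦ norm_nonneg _) fun i _ ↦ hp₂ _ (hpart i)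
        _ = R ^ c.length := by simp
        _ ≤ R ^ n := pow_le_pow_right₀ hR hlen
    calc _ ≤ ‖q₁ c.length‖ * c.length * max ‖fun i ↦ p₁ (c.partSize i)‖
              ‖fun i ↦ p₂ (c.partSize i)‖ ^ (c.length - 1) *
              ‖(fun i ↦ p₁ (c.partSize i)) - fun i ↦ p₂ (c.partSize i)‖ +
            ‖q₁ c.length - q₂ c.length‖ * ∏ i, ‖p₂ (c.partSize i)‖ :=
          c.norm_compAlongOrderedFinpartition_sub_compAlongOrderedFinpartition_le ..
      _ ≤ M * n * R ^ n * D + δ * R ^ n := by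
          gcongr
          · exact hq₁ _ hlen
          · exact hq _ hlen
      _ = R ^ n * (M * n * D + δ) := by ring
  calc _ = ‖∑ c : OrderedFinpartition n,
        (q₁.compAlongOrderedFinpartition p₁ c - q₂.compAlongOrderedFinpartition p₂ c)‖ := by
        rw [Finset.sum_sub_distrib]; rfl
    _ ≤ ∑ _c : OrderedFinpartition n, R ^ n * (M * n * D + δ) :=
        (norm_sum_le _ _).trans (Finset.sum_le_sum fun c _ ↦ term c)
    _ = _ := by simp

end FormalMultilinearSeries

theorem stmt18_general (m l p k : ℕ) (U : Set (Fin m → ℝ)) (V : Set (Fin l → ℝ))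
    (hUo : IsOpen U)
    (hVo : IsOpen V) (hVc : Convex ℝ V)
    (ψ : (Fin l → ℝ) → (Fin p → ℝ)) (hψ : ContDiffOn ℝ (k + 1) ψ V)
    (Mψ : ℝ)
    (hMψ : ∀ j : ℕ, j ≤ k + 1 → ∀ y ∈ V, ‖iteratedFDerivWithin ℝ j ψ V y‖ ≤ Mψ)
    (R : ℝ) :
    ∃ C > 0, ∀ φ₁ φ₂ : (Fin m → ℝ) → (Fin l → ℝ),
      ContDiffOn ℝ k φ₁ U → ContDiffOn ℝ k φ₂ U →
      Set.MapsTo φ₁ U V → Set.MapsTo φ₂ U V →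
      (∀ j : ℕ, j ≤ k → ∀ x ∈ U, ‖iteratedFDerivWithin ℝ j φ₁ U x‖ ≤ R) →
      (∀ j : ℕ, j ≤ k → ∀ x ∈ U, ‖iteratedFDerivWithin ℝ j φ₂ U x‖ ≤ R) →
      ∀ D : ℝ,
      (∀ j : ℕ, j ≤ k → ∀ x ∈ U,
        ‖iteratedFDerivWithin ℝ j φ₁ U x - iteratedFDerivWithin ℝ j φ₂ U x‖ ≤ D) →
      ∀ j : ℕ, j ≤ k → ∀ x ∈ U,
        ‖iteratedFDerivWithin ℝ j (fun t => ψ (φ₁ t) - ψ (φ₂ t)) U x‖ ≤ C * Mψ * D := by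
  -- `N` bounds the number of Faà di Bruno terms in every order `j ≤ k`.
  set N := ∑ i ∈ Finset.range (k + 1), Fintype.card (OrderedFinpartition i)
  have hN : 0 < N := Finset.sum_pos (fun _ _ ↦ Fintype.card_pos) Finset.nonempty_range_add_one
  refine ⟨N * (max R 1 ^ k * (k + 1)), by positivity, ?_⟩
  intro φ₁ φ₂ hφ₁ hφ₂ hmaps₁ hmaps₂ hR₁ hR₂ D hD j hj x hx
  have hMψ₀ : 0 ≤ Mψ := (norm_nonneg _).trans (hMψ 0 k.succ.zero_le _ (hmaps₁ hx))
  have hD₀ : 0 ≤ D := (norm_nonneg _).trans (hD 0 k.zero_le x hx)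
  have hψ_sub (i : ℕ) (hi : i ≤ j) :
      ‖iteratedFDerivWithin ℝ i ψ V (φ₁ x) - iteratedFDerivWithin ℝ i ψ V (φ₂ x)‖ ≤ Mψ * D :=
    calc _ ≤ Mψ * ‖φ₁ x - φ₂ x‖ :=
          hVc.norm_iteratedFDerivWithin_sub_le hVo.uniqueDiffOn (hψ.of_le (by norm_cast; omega))
            (hMψ (i + 1) (by omega)) (hmaps₁ hx) (hmaps₂ hx)
      _ ≤ Mψ * D := by
          rw [← norm_iteratedFDerivWithin_zero_sub (𝕜 := ℝ) φ₁ φ₂ U x]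
          gcongr
          exact hD 0 k.zero_le x hx
  have hcard : Fintype.card (OrderedFinpartition j) ≤ N :=
    Finset.single_le_sum (f := fun i ↦ Fintype.card (OrderedFinpartition i))
      (fun _ _ ↦ Nat.zero_le _) (Finset.mem_range.2 (by omega))
  rw [iteratedFDerivWithin_comp_sub_comp (hψ.of_le (by norm_cast; omega)) hφ₁ hφ₂
    hVo.uniqueDiffOn hUo.uniqueDiffOn hmaps₁ hmaps₂ hx (by exact_mod_cast hj)]
  calc _ ≤ Fintype.card (OrderedFinpartition j) * (max R 1 ^ j * (Mψ * j * D + Mψ * D)) :=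
        FormalMultilinearSeries.norm_taylorComp_sub_taylorComp_le (le_max_right R 1)
          (fun i hi ↦ hMψ i (by omega) _ (hmaps₁ hx)) hψ_sub
          (fun i hi ↦ (hR₁ i (by omega) x hx).trans (le_max_left R 1))
          (fun i hi ↦ (hR₂ i (by omega) x hx).trans (le_max_left R 1))
          (fun i hi ↦ hD i (by omega) x hx)
    _ ≤ N * (max R 1 ^ k * (Mψ * k * D + Mψ * D)) := by
        gcongr
        exact le_max_right R 1
    _ = N * (max R 1 ^ k * (k + 1)) * Mψ * D := by ring

theorem stmt18 (m l p k : ℕ) (U : Set (Fin m → ℝ)) (V : Set (Fin l → ℝ))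
    (hUo : IsOpen U) (hUb : Bornology.IsBounded U) (hUc : Convex ℝ U)
    (hVo : IsOpen V) (hVb : Bornology.IsBounded V) (hVc : Convex ℝ V)
    (ψ : (Fin l → ℝ) → (Fin p → ℝ)) (hψ : ContDiffOn ℝ (k + 1) ψ V)
    (Mψ : ℝ)
    (hMψ : ∀ j : ℕ, j ≤ k + 1 → ∀ y ∈ V, ‖iteratedFDerivWithin ℝ j ψ V y‖ ≤ Mψ)
    (R : ℝ) (hR : 0 < R) :
    ∃ C > 0, ∀ φ₁ φ₂ : (Fin m → ℝ) → (Fin l → ℝ),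
      ContDiffOn ℝ k φ₁ U → ContDiffOn ℝ k φ₂ U →
      Set.MapsTo φ₁ U V → Set.MapsTo φ₂ U V →
      (∀ j : ℕ, j ≤ k → ∀ x ∈ U, ‖iteratedFDerivWithin ℝ j φ₁ U x‖ ≤ R) →
      (∀ j : ℕ, j ≤ k → ∀ x ∈ U, ‖iteratedFDerivWithin ℝ j φ₂ U x‖ ≤ R) →
      ∀ D : ℝ,
      (∀ j : ℕ, j ≤ k → ∀ x ∈ U,
        ‖iteratedFDerivWithin ℝ j φ₁ U x - iteratedFDerivWithin ℝ j φ₂ U x‖ ≤ D) →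
      ∀ j : ℕ, j ≤ k → ∀ x ∈ U,
        ‖iteratedFDerivWithin ℝ j (fun t => ψ (φ₁ t) - ψ (φ₂ t)) U x‖ ≤ C * Mψ * D :=
  stmt18_general m l p k U V hUo hVo hVc ψ hψ Mψ hMψ R
end

section
/- Let d ≥ 1 be an integer, I ⊆ ℝ a bounded open interval, and λ : I → ℂ^d an absolutely continuous curve (each component absolutely continuous). Then for almost every x ∈ I — indeed for every x ∈ I at which λ is differentiable — the metric speed of the curve of unordered tuples exists and satisfies lim_{h→0} 𝐝([λ(x+h)],[λ(x)])/|h| = (1/√d) ‖λ'(x)‖_2. -/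
open MeasureTheory Filter Topology

/-- Normalized Euclidean distance `(1/√d)‖z − w‖₂` on `ℂ^d`. -/
noncomputable def e2dist {d : ℕ} (z w : Fin d → ℂ) : ℝ :=
  (Real.sqrt d)⁻¹ * Real.sqrt (∑ i, ‖z i - w i‖ ^ 2)

/-- The distance `𝐝([z],[w])` between unordered `d`-tuples. -/
noncomputable def ddist {d : ℕ} (z w : Fin d → ℂ) : ℝ :=
  ⨅ σ : Equiv.Perm (Fin d), e2dist z (fun i => w (σ i))

/-!
Near an ordered tuple `w`, the optimal matching in `𝐝([z],[w])` is the identity: a permutation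
`σ` either fixes `w`, or moves it to a tuple at positive distance from `w`, which `z` cannot
approach as `z → w`. Hence `𝐝([λ(x+h)],[λ(x)])` agrees with `(1/√d)‖λ(x+h) − λ(x)‖₂` for small
`h`, and the speed is that of `λ` itself. An absolutely continuous curve is the integral of its
density, so it is differentiable almost everywhere by the Lebesgue differentiation theorem.
-/

section UnorderedTuples

variable {d : ℕ}

theorem e2dist_eq_norm (z w : Fin d → ℂ) :
    e2dist z w = (Real.sqrt d)⁻¹ * ‖WithLp.toLp 2 (z - w)‖ := by
  simp [e2dist, EuclideanSpace.norm_eq]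

theorem e2dist_div_abs (z w : Fin d → ℂ) (h : ℝ) :
    e2dist z w / |h| = (Real.sqrt d)⁻¹ * ‖WithLp.toLp 2 (h⁻¹ • (z - w))‖ := by
  rw [e2dist_eq_norm, WithLp.toLp_smul, norm_smul, Real.norm_eq_abs, abs_inv]
  ring

theorem continuous_e2dist_left (w : Fin d → ℂ) : Continuous fun z => e2dist z w := by
  simp only [e2dist_eq_norm]
  fun_prop

theorem e2dist_pos_of_ne {z w : Fin d → ℂ} (hzw : z ≠ w) : 0 < e2dist z w := by
  obtain ⟨i, -⟩ := Function.ne_iff.1 hzw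
  have hd : (0 : ℝ) < d := Nat.cast_pos.2 (Fin.pos i)
  rw [e2dist_eq_norm]
  exact mul_pos (inv_pos.2 (Real.sqrt_pos.2 hd))
    (norm_pos_iff.2 ((WithLp.toLp_eq_zero 2).not.2 (sub_ne_zero.2 hzw)))

theorem ddist_le_e2dist (z w : Fin d → ℂ) : ddist z w ≤ e2dist z w :=
  ciInf_le (Finite.bddBelow_range _) (1 : Equiv.Perm (Fin d))

theorem eventually_ddist_eq_e2dist (w : Fin d → ℂ) :
    ∀ᶠ z in 𝓝 w, ddist z w = e2dist z w := by
  have hσ : ∀ σ : Equiv.Perm (Fin d),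
      ∀ᶠ z in 𝓝 w, e2dist z w ≤ e2dist z (fun i => w (σ i)) := by
    intro σ
    by_cases hfix : (fun i => w (σ i)) = w
    · exact Eventually.of_forall fun z => (congrArg (e2dist z) hfix).ge
    · have hself : e2dist w w = 0 := by simp [e2dist]
      have hnear := (continuous_e2dist_left w).tendsto w
      rw [hself] at hnear
      exact (hnear.eventually_lt ((continuous_e2dist_left _).tendsto w)
        (e2dist_pos_of_ne (Ne.symm hfix))).mono fun _ => le_of_lt
  filter_upwards [eventually_all.2 hσ] with z hz
  exact (ddist_le_e2dist z w).antisymm (le_ciInf hz)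

theorem tendsto_ddist_div_abs_of_hasDerivAt {lam : ℝ → Fin d → ℂ} {v : Fin d → ℂ} {x : ℝ}
    (hv : HasDerivAt lam v x) :
    Tendsto (fun h : ℝ => ddist (lam (x + h)) (lam x) / |h|) (𝓝[≠] (0 : ℝ))
      (𝓝 ((Real.sqrt d)⁻¹ * Real.sqrt (∑ i, ‖v i‖ ^ 2))) := by
  have hslope : Tendsto (fun h : ℝ => e2dist (lam (x + h)) (lam x) / |h|) (𝓝[≠] (0 : ℝ))
      (𝓝 ((Real.sqrt d)⁻¹ * ‖WithLp.toLp 2 v‖)) := by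
    simp only [e2dist_div_abs]
    exact ((by fun_prop : Continuous fun u : Fin d → ℂ =>
      (Real.sqrt d)⁻¹ * ‖WithLp.toLp 2 u‖).tendsto v).comp hv.tendsto_slope_zero
  have hnear : Tendsto (fun h : ℝ => lam (x + h)) (𝓝[≠] (0 : ℝ)) (𝓝 (lam x)) := by
    exact hv.continuousAt.tendsto.comp (tendsto_nhdsWithin_of_tendsto_nhds
      ((continuous_const_add x).tendsto' 0 x (add_zero x)))
  rw [EuclideanSpace.norm_eq] at hslope
  refine hslope.congr' ?_
  filter_upwards [hnear.eventually (eventually_ddist_eq_e2dist (lam x))] with h hh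
  rw [hh]

end UnorderedTuples

theorem ae_hasDerivAt_of_sub_eq_intervalIntegral {E : Type*} [NormedAddCommGroup E]
    [NormedSpace ℝ E] [CompleteSpace E] {f g : ℝ → E} {a b : ℝ}
    (hg : IntegrableOn g (Set.Ioo a b))
    (hf : ∀ x ∈ Set.Ioo a b, ∀ y ∈ Set.Ioo a b, f y - f x = ∫ t in x..y, g t) :
    ∀ᵐ x ∂(volume.restrict (Set.Ioo a b)), HasDerivAt f (g x) x := by
  set G := (Set.Ioo a b).indicator g
  have hG : LocallyIntegrable G volume :=
    ((integrable_indicator_iff measurableSet_Ioo).2 hg).locallyIntegrable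
  filter_upwards [ae_restrict_of_ae (LocallyIntegrable.ae_hasDerivAt_integral hG),
    self_mem_ae_restrict measurableSet_Ioo] with x hx hxs
  have hfG : f =ᶠ[𝓝 x] fun y => f x + ∫ t in x..y, G t := by
    filter_upwards [isOpen_Ioo.mem_nhds hxs] with y hys
    have hgG : ∫ t in x..y, g t = ∫ t in x..y, G t := intervalIntegral.integral_congr
      fun t ht => (Set.indicator_of_mem (Set.ordConnected_Ioo.uIcc_subset hxs hys ht) g).symm
    rw [← hgG, ← hf x hxs y hys, add_sub_cancel]
  have hGx : G x = g x := Set.indicator_of_mem hxs g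
  exact hGx ▸ ((hx x).const_add (f x)).congr_of_eventuallyEq hfG

theorem stmt19_general (d : ℕ) (α β : ℝ)
    (lam : ℝ → Fin d → ℂ)
    (hAC : ∃ g : ℝ → Fin d → ℂ, IntegrableOn g (Set.Ioo α β) ∧
      ∀ x ∈ Set.Ioo α β, ∀ y ∈ Set.Ioo α β, lam y - lam x = ∫ t in x..y, g t) :
    (∀ x ∈ Set.Ioo α β, DifferentiableAt ℝ lam x →
      Tendsto (fun h : ℝ => ddist (lam (x + h)) (lam x) / |h|) (𝓝[≠] (0 : ℝ))
        (𝓝 ((Real.sqrt d)⁻¹ * Real.sqrt (∑ i, ‖deriv lam x i‖ ^ 2)))) ∧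
    (∀ᵐ x ∂(volume.restrict (Set.Ioo α β)),
      Tendsto (fun h : ℝ => ddist (lam (x + h)) (lam x) / |h|) (𝓝[≠] (0 : ℝ))
        (𝓝 ((Real.sqrt d)⁻¹ * Real.sqrt (∑ i, ‖deriv lam x i‖ ^ 2)))) := by
  obtain ⟨g, hg, hlam⟩ := hAC
  refine ⟨fun x _ hx => tendsto_ddist_div_abs_of_hasDerivAt hx.hasDerivAt, ?_⟩
  filter_upwards [ae_hasDerivAt_of_sub_eq_intervalIntegral hg hlam] with x hx
  exact tendsto_ddist_div_abs_of_hasDerivAt hx.differentiableAt.hasDerivAt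

theorem stmt19 (d : ℕ) (hd : 1 ≤ d) (α β : ℝ) (hαβ : α < β)
    (lam : ℝ → Fin d → ℂ)
    (hAC : ∃ g : ℝ → Fin d → ℂ, IntegrableOn g (Set.Ioo α β) ∧
      ∀ x ∈ Set.Ioo α β, ∀ y ∈ Set.Ioo α β, lam y - lam x = ∫ t in x..y, g t) :
    (∀ x ∈ Set.Ioo α β, DifferentiableAt ℝ lam x →
      Tendsto (fun h : ℝ => ddist (lam (x + h)) (lam x) / |h|) (𝓝[≠] (0 : ℝ))
        (𝓝 ((Real.sqrt d)⁻¹ * Real.sqrt (∑ i, ‖deriv lam x i‖ ^ 2)))) ∧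
    (∀ᵐ x ∂(volume.restrict (Set.Ioo α β)),
      Tendsto (fun h : ℝ => ddist (lam (x + h)) (lam x) / |h|) (𝓝[≠] (0 : ℝ))
        (𝓝 ((Real.sqrt d)⁻¹ * Real.sqrt (∑ i, ‖deriv lam x i‖ ^ 2)))) :=
  stmt19_general d α β lam hAC
end
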